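/- Let a_0, a_1 ∈ ℂ and consider the Faber polynomials F_m associated with the sequence (a_0, a_1, 0, 0, …) (i.e., a_k = 0 for k ≥ 2). Then for every m ≥ 1 and all u, v ∈ ℂ with u·v = a_1, one has F_m(a_0 + u + v) = u^m + v^m. In particular, for every w ∈ ℂ with w ≠ 0, F_m(w + a_0 + a_1/w) = w^m + (a_1/w)^m. -/

import Mathlib

/-- The Faber polynomials associated with a sequence `a : ℕ → ℂ`, defined by the
recursion `F₀ = 1` and
`F_{m+1}(z) = z·F_m(z) − m·a_m − ∑_{k=0}^{m} a_k·F_{m−k}(z)`. -/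
noncomputable def faber (a : ℕ → ℂ) : ℕ → Polynomial ℂ
  | 0 => 1
  | m + 1 =>
      Polynomial.X * faber a m - Polynomial.C ((m : ℂ) * a m) -
        ∑ k ∈ Finset.range (m + 1), Polynomial.C (a k) * faber a (m - k)
  termination_by m => m
  decreasing_by all_goals omega

/-- The sequence `(a₀, a₁, 0, 0, …)` associated with the ellipse with exterior
conformal map `w ↦ w + a₀ + a₁/w`. -/
noncomputable def ellipseSeq (a₀ a₁ : ℂ) : ℕ → ℂ :=
  fun k => if k = 0 then a₀ else if k = 1 then a₁ else 0

/-! For `a = (a₀, a₁, 0, 0, …)` the Faber recursion collapses to the three-term recursion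
`F_{m+1} = (X - a₀) F_m - a₁ F_{m-1}` for `m ≥ 2`, with `F₁ = X - a₀` and
`F₂ = (X - a₀) F₁ - 2 a₁`. When `u v = a₁`, the power sums `u^m + v^m` obey the same
recursion at `X = a₀ + u + v` (they are the Dickson polynomials in `u + v`), and agree with
`F₁, F₂` there; the extra `- a₁` in `F₂` compensates for `u⁰ + v⁰ = 2 ≠ F₀`. -/

open Polynomial

namespace ellipseSeq

variable {a₀ a₁ : ℂ}

theorem eq_zero_of_two_le {k : ℕ} (hk : 2 ≤ k) : ellipseSeq a₀ a₁ k = 0 := by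
  simp only [ellipseSeq]
  rw [if_neg (by omega), if_neg (by omega)]

theorem sum_range_C_mul {m : ℕ} (hm : 1 ≤ m) (F : ℕ → ℂ[X]) :
    ∑ k ∈ Finset.range (m + 1), C (ellipseSeq a₀ a₁ k) * F (m - k)
      = C a₀ * F m + C a₁ * F (m - 1) := by
  obtain ⟨n, rfl⟩ : ∃ n, m = n + 1 := ⟨m - 1, by omega⟩
  have htail : ∀ k ∈ Finset.range n, C (ellipseSeq a₀ a₁ (k + 2)) * F (n + 1 - (k + 2)) = 0 :=
    fun k _ => by rw [eq_zero_of_two_le (by omega), C_0, zero_mul]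
  rw [Finset.sum_range_succ', Finset.sum_range_succ', Finset.sum_eq_zero htail]
  simp only [ellipseSeq, zero_add, one_ne_zero, ↓reduceIte, add_tsub_cancel_right, tsub_zero]
  ring

end ellipseSeq

section faber_ellipseSeq

variable (a₀ a₁ : ℂ)

theorem faber_ellipseSeq_one : faber (ellipseSeq a₀ a₁) 1 = X - C a₀ := by
  rw [faber]
  simp [faber, ellipseSeq]

theorem faber_ellipseSeq_two :
    faber (ellipseSeq a₀ a₁) 2 = (X - C a₀) * faber (ellipseSeq a₀ a₁) 1 - 2 * C a₁ := by
  rw [faber, ellipseSeq.sum_range_C_mul le_rfl]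
  simp only [faber, mul_one, CharP.cast_eq_zero, ellipseSeq, ↓reduceIte, zero_mul, map_zero, sub_zero,
    zero_add, Finset.range_one, zero_tsub, Finset.sum_singleton, Nat.cast_one, one_ne_zero, one_mul,
    tsub_self]
  ring

theorem faber_ellipseSeq_add_three (n : ℕ) :
    faber (ellipseSeq a₀ a₁) (n + 3) = (X - C a₀) * faber (ellipseSeq a₀ a₁) (n + 2)
      - C a₁ * faber (ellipseSeq a₀ a₁) (n + 1) := by
  rw [faber, ellipseSeq.sum_range_C_mul (by omega), ellipseSeq.eq_zero_of_two_le (by omega)]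
  simp only [mul_zero, C_0, sub_zero, show n + 2 - 1 = n + 1 by omega]
  ring

end faber_ellipseSeq

theorem eval_faber_ellipseSeq {a₀ a₁ u v : ℂ} (huv : u * v = a₁) :
    ∀ m, 1 ≤ m → (faber (ellipseSeq a₀ a₁) m).eval (a₀ + u + v) = u ^ m + v ^ m
  | 1, _ => by
    simp only [faber_ellipseSeq_one, eval_sub, eval_X, eval_C, pow_one]
    ring
  | 2, _ => by
    simp only [faber_ellipseSeq_two, faber_ellipseSeq_one, eval_sub, eval_mul, eval_X, eval_C,
      eval_ofNat]
    linear_combination 2 * huv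
  | n + 3, _ => by
    rw [faber_ellipseSeq_add_three]
    simp only [eval_sub, eval_mul, eval_X, eval_C]
    rw [eval_faber_ellipseSeq huv (n + 2) (by omega), eval_faber_ellipseSeq huv (n + 1) (by omega)]
    linear_combination (u ^ (n + 1) + v ^ (n + 1)) * huv

/-- For the Faber polynomials `F_m` associated with the sequence
`(a₀, a₁, 0, 0, …)`, for every `m ≥ 1` and all `u, v ∈ ℂ` with `u·v = a₁` one has
`F_m(a₀ + u + v) = u^m + v^m`; in particular, for every `w ≠ 0`,
`F_m(w + a₀ + a₁/w) = w^m + (a₁/w)^m`. -/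
theorem faber_ellipse_eval (a₀ a₁ : ℂ) (m : ℕ) (hm : 1 ≤ m) :
    (∀ u v : ℂ, u * v = a₁ →
      (faber (ellipseSeq a₀ a₁) m).eval (a₀ + u + v) = u ^ m + v ^ m) ∧
    (∀ w : ℂ, w ≠ 0 →
      (faber (ellipseSeq a₀ a₁) m).eval (w + a₀ + a₁ / w) = w ^ m + (a₁ / w) ^ m) := by
  refine ⟨fun u v huv => eval_faber_ellipseSeq huv m hm, fun w hw => ?_⟩
  rw [show w + a₀ + a₁ / w = a₀ + w + a₁ / w by ring]
  exact eval_faber_ellipseSeq (mul_div_cancel₀ a₁ hw) m hm
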